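/- arXiv:1803.00265 — 2 statements merged into one kernel-verified Lean document; each statement's English description precedes it below -/
import Mathlib

section
/- Let W(I₁,I₂,I₃) be a differentiable isotropic hyperelastic energy with β₁ = (2/√I₃)·∂W/∂I₁ and β₋₁ = −2√I₃·∂W/∂I₂. Then the Cauchy shear stress in simple shear satisfies σ₁₂(γ) = (β₁ − β₋₁)(3+γ²,3+γ²,1)·γ = d/dγ [W(3+γ², 3+γ², 1)]; consequently, σ₁₂ is monotone increasing in γ for γ ≥ 0 if and only if γ ↦ W(3+γ², 3+γ², 1) is convex on [0,∞). -/
/-! Along the shear path both invariants I₁ = I₂ = 3 + γ² have derivative 2γ, so by the chain rule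
d/dγ W(3+γ², 3+γ², 1) = 2γ (∂₁W + ∂₂W), which is exactly (β₁ - β₋₁) γ at I₃ = 1. A differentiable
function of one variable is convex exactly when its derivative is monotone. -/

theorem DifferentiableAt.hasDerivAt_comp_prodMk {W : ℝ × ℝ × ℝ → ℝ} {u v : ℝ → ℝ}
    {u' v' x c : ℝ} (hW : DifferentiableAt ℝ W (u x, v x, c)) (hu : HasDerivAt u u' x)
    (hv : HasDerivAt v v' x) :
    HasDerivAt (fun t => W (u t, v t, c))
      (deriv (fun s => W (s, v x, c)) (u x) * u' + deriv (fun s => W (u x, s, c)) (v x) * v')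
      x := by
  set L := fderiv ℝ W (u x, v x, c)
  have hL : HasFDerivAt W L (u x, v x, c) := hW.hasFDerivAt
  have hW₁ : HasDerivAt (fun s => W (s, v x, c)) (L (1, 0, 0)) (u x) :=
    hL.comp_hasDerivAt _ ((hasDerivAt_id _).prodMk (hasDerivAt_const _ _))
  have hW₂ : HasDerivAt (fun s => W (u x, s, c)) (L (0, 1, 0)) (v x) :=
    hL.comp_hasDerivAt _
      ((hasDerivAt_const _ _).prodMk ((hasDerivAt_id _).prodMk (hasDerivAt_const _ _)))
  have hcurve : HasDerivAt (fun t => W (u t, v t, c)) (L (u', v', 0)) x :=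
    hL.comp_hasDerivAt x (hu.prodMk (hv.prodMk (hasDerivAt_const x c)))
  have hsplit : ((u', v', 0) : ℝ × ℝ × ℝ) = u' • (1, 0, 0) + v' • (0, 1, 0) := by
    simp
  rw [hW₁.deriv, hW₂.deriv, mul_comm, mul_comm _ v', ← smul_eq_mul, ← smul_eq_mul,
    ← L.map_smul, ← L.map_smul, ← map_add, ← hsplit]
  exact hcurve

theorem monotoneOn_deriv_iff_convexOn {s : Set ℝ} {f : ℝ → ℝ} (hs : Convex ℝ s)
    (hf : ∀ x ∈ s, DifferentiableAt ℝ f x) : MonotoneOn (deriv f) s ↔ ConvexOn ℝ s f := by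
  refine ⟨fun hmono => ?_, fun hconv => hconv.monotoneOn_deriv hf⟩
  exact MonotoneOn.convexOn_of_deriv hs
    (fun x hx => (hf x hx).continuousAt.continuousWithinAt)
    (fun x hx => (hf x (interior_subset hx)).differentiableWithinAt)
    (hmono.mono interior_subset)

theorem stmt_16 (W : ℝ × ℝ × ℝ → ℝ) (hW : Differentiable ℝ W) :
    let β₁ : ℝ → ℝ := fun γ =>
      (2 / Real.sqrt 1) * deriv (fun s => W (s, 3 + γ ^ 2, 1)) (3 + γ ^ 2)
    let βm : ℝ → ℝ := fun γ =>
      -(2 * Real.sqrt 1) * deriv (fun s => W (3 + γ ^ 2, s, 1)) (3 + γ ^ 2)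
    let σ : ℝ → ℝ := fun γ => (β₁ γ - βm γ) * γ
    (∀ γ : ℝ, σ γ = deriv (fun t : ℝ => W (3 + t ^ 2, 3 + t ^ 2, 1)) γ) ∧
    (MonotoneOn σ (Set.Ici 0) ↔
      ConvexOn ℝ (Set.Ici 0) (fun γ : ℝ => W (3 + γ ^ 2, 3 + γ ^ 2, 1))) := by
  intro β₁ βm σ
  have hshear (γ : ℝ) : HasDerivAt (fun t : ℝ => W (3 + t ^ 2, 3 + t ^ 2, 1)) (σ γ) γ := by
    have hI : HasDerivAt (fun t : ℝ => 3 + t ^ 2) (2 * γ) γ := by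
      simpa using (hasDerivAt_pow 2 γ).const_add 3
    convert (hW _).hasDerivAt_comp_prodMk hI hI using 1
    simp only [σ, β₁, βm, Real.sqrt_one]
    ring
  have hσ : σ = deriv (fun t : ℝ => W (3 + t ^ 2, 3 + t ^ 2, 1)) :=
    funext fun γ => (hshear γ).deriv.symm
  refine ⟨fun γ => congrFun hσ γ, ?_⟩
  rw [hσ]
  exact monotoneOn_deriv_iff_convexOn (convex_Ici 0) fun γ _ => (hshear γ).differentiableAt
end

section
/- For the energy W(I₁,I₂,I₃) = (3μα/4)[log I₁ + log I₂ − log I₃ − 2 log 3] + (μ/2)(1−α)[I₁ + 2 I₃^{-1/2} − 5] with μ > 0 and 0 < α < 1, the empirical inequalities hold on invariants of positive definite B: β₀ = (2/√I₃)(I₂·∂W/∂I₂ + I₃·∂W/∂I₃) = −μ(1−α)/I₃ < 0, β₁ = (2/√I₃)·∂W/∂I₁ > 0, and β₋₁ = −2√I₃·∂W/∂I₂ = −(3μα/2)·√I₃/I₂ ≤ 0; moreover at I₁ = I₂ = 3, I₃ = 1 the reference configuration is stress-free: ∂W/∂I₁ + 2·∂W/∂I₂ + ∂W/∂I₃ =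 0 there. -/
/-! The partial derivatives of `W` are explicit. In `β₀` the logarithmic parts of `I₂ ∂W/∂I₂` and
`I₃ ∂W/∂I₃` cancel, leaving `-μ(1-α)/I₃`. The signs then only need the invariants to be positive:
`tr B > 0` and `det B > 0` for positive definite `B`, and `tr (Cof B) = tr (adj B) = det B · tr B⁻¹ > 0`
because `B⁻¹` is positive definite too. -/

open Matrix

noncomputable def Cof (A : Matrix (Fin 3) (Fin 3) ℝ) : Matrix (Fin 3) (Fin 3) ℝ :=
  (Matrix.adjugate A)ᵀ

/-- The counterexample energy of Remark `pucciCounterexample`. -/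
noncomputable def Wen (μ α : ℝ) (x y z : ℝ) : ℝ :=
  (3 * μ * α / 4) * (Real.log x + Real.log y - Real.log z - 2 * Real.log 3) +
    (μ / 2) * (1 - α) * (x + 2 / Real.sqrt z - 5)

lemma Matrix.PosDef.trace_adjugate_pos {n : Type*} [Fintype n] [DecidableEq n] [Nonempty n]
    {B : Matrix n n ℝ} (hB : B.PosDef) : 0 < B.adjugate.trace := by
  have hdet := hB.det_pos
  have hadj : B.adjugate = B.det • B⁻¹ := by
    rw [Matrix.inv_def, smul_smul, Ring.mul_inverse_cancel _ hdet.ne'.isUnit, one_smul]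
  rw [hadj, Matrix.trace_smul, smul_eq_mul]
  exact mul_pos hdet hB.inv.trace_pos

lemma Matrix.PosDef.trace_cof_pos {B : Matrix (Fin 3) (Fin 3) ℝ} (hB : B.PosDef) :
    0 < (Cof B).trace := by
  rw [Cof, Matrix.trace_transpose]
  exact hB.trace_adjugate_pos

section PartialDerivatives

variable (μ α : ℝ)

lemma deriv_Wen_fst (y z : ℝ) {x : ℝ} (hx : 0 < x) :
    deriv (fun s => Wen μ α s y z) x = 3 * μ * α / 4 / x + μ / 2 * (1 - α) := by
  have h : HasDerivAt (fun s => Wen μ α s y z) (3 * μ * α / 4 * x⁻¹ + μ / 2 * (1 - α) * 1) x := by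
    unfold Wen
    exact ((((Real.hasDerivAt_log hx.ne').add_const _).sub_const _).sub_const _).const_mul _
      |>.add ((((hasDerivAt_id x).add_const _).sub_const _).const_mul _)
  rw [h.deriv]
  ring

lemma deriv_Wen_snd (x z : ℝ) {y : ℝ} (hy : 0 < y) :
    deriv (fun s => Wen μ α x s z) y = 3 * μ * α / 4 / y := by
  have h : HasDerivAt (fun s => Wen μ α x s z) (3 * μ * α / 4 * y⁻¹ + 0) y := by
    unfold Wen
    exact ((((Real.hasDerivAt_log hy.ne').const_add _).sub_const _).sub_const _).const_mul _
      |>.add (hasDerivAt_const _ _)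
  rw [h.deriv]
  ring

lemma deriv_Wen_thd (x y : ℝ) {z : ℝ} (hz : 0 < z) :
    deriv (fun s => Wen μ α x y s) z =
      -(3 * μ * α / 4) / z - μ / 2 * (1 - α) / (z * Real.sqrt z) := by
  have hsz : Real.sqrt z ≠ 0 := (Real.sqrt_pos.mpr hz).ne'
  have hsqrt : HasDerivAt (fun s => 2 / Real.sqrt s)
      (2 * (-(1 / (2 * Real.sqrt z)) / Real.sqrt z ^ 2)) z := by
    simpa [div_eq_mul_inv] using ((Real.hasDerivAt_sqrt hz.ne').inv hsz).const_mul 2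
  have h : HasDerivAt (fun s => Wen μ α x y s)
      (3 * μ * α / 4 * (-z⁻¹) +
        μ / 2 * (1 - α) * (2 * (-(1 / (2 * Real.sqrt z)) / Real.sqrt z ^ 2))) z := by
    unfold Wen
    exact ((((Real.hasDerivAt_log hz.ne').const_sub _).sub_const _).const_mul _).add
      (((hsqrt.const_add _).sub_const _).const_mul _)
  rw [h.deriv, Real.sq_sqrt hz.le]
  field_simp
  ring

end PartialDerivatives

theorem stmt_18 (μ α : ℝ) (hμ : 0 < μ) (hα0 : 0 < α) (hα1 : α < 1) :
    (∀ I₁ I₂ I₃ : ℝ,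
      (∃ B : Matrix (Fin 3) (Fin 3) ℝ, B.PosDef ∧
        B.trace = I₁ ∧ (Cof B).trace = I₂ ∧ B.det = I₃) →
      ((2 / Real.sqrt I₃) *
          (I₂ * deriv (fun s => Wen μ α I₁ s I₃) I₂ +
            I₃ * deriv (fun s => Wen μ α I₁ I₂ s) I₃) = -(μ * (1 - α)) / I₃ ∧
        (2 / Real.sqrt I₃) *
          (I₂ * deriv (fun s => Wen μ α I₁ s I₃) I₂ +
            I₃ * deriv (fun s => Wen μ α I₁ I₂ s) I₃) < 0) ∧
      0 < (2 / Real.sqrt I₃) * deriv (fun s => Wen μ α s I₂ I₃) I₁ ∧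
      (-(2 * Real.sqrt I₃) * deriv (fun s => Wen μ α I₁ s I₃) I₂ =
          -(3 * μ * α / 2) * Real.sqrt I₃ / I₂ ∧
        -(2 * Real.sqrt I₃) * deriv (fun s => Wen μ α I₁ s I₃) I₂ ≤ 0)) ∧
    deriv (fun s => Wen μ α s 3 1) 3 + 2 * deriv (fun s => Wen μ α 3 s 1) 3 +
      deriv (fun s => Wen μ α 3 3 s) 1 = 0 := by
  have h1α : 0 < 1 - α := by linarith
  refine ⟨?_, ?_⟩
  · rintro I₁ I₂ I₃ ⟨B, hB, rfl, rfl, rfl⟩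
    have hI₁ : 0 < B.trace := hB.trace_pos
    have hI₂ : 0 < (Cof B).trace := hB.trace_cof_pos
    have hI₃ : 0 < B.det := hB.det_pos
    rw [deriv_Wen_fst μ α _ _ hI₁, deriv_Wen_snd μ α _ _ hI₂, deriv_Wen_thd μ α _ _ hI₃]
    have hβ₀ : 2 / √B.det * ((Cof B).trace * (3 * μ * α / 4 / (Cof B).trace) +
        B.det * (-(3 * μ * α / 4) / B.det - μ / 2 * (1 - α) / (B.det * √B.det))) =
        -(μ * (1 - α)) / B.det := by
      field_simp
      rw [Real.sq_sqrt hI₃.le]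
      ring
    refine ⟨⟨hβ₀, hβ₀ ▸ div_neg_of_neg_of_pos (neg_neg_of_pos (mul_pos hμ h1α)) hI₃⟩, ?_, ?_, ?_⟩
    · positivity
    · field_simp
      ring
    · rw [neg_mul, neg_nonpos]
      positivity
  · rw [deriv_Wen_fst μ α 3 1 three_pos, deriv_Wen_snd μ α 3 1 three_pos,
      deriv_Wen_thd μ α 3 3 one_pos, Real.sqrt_one]
    ring
end
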